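/- Let A : ℝ^d → ℝ be a convex function and let B : ℝ^d → ℝ^d be a linear, self-adjoint, positive-definite (hence invertible) map. If the convex conjugate satisfies A* = A ∘ B, where A*(x) = sup_{θ ∈ ℝ^d} (⟪θ,x⟫ − A(θ)), then A(x) = (1/2)⟪x, B⁻¹x⟫ for all x ∈ ℝ^d. (In particular, an exponential family whose cumulant generating function A satisfies A* = A ∘ B is the Gaussian location family with covariance matrix B.) -/
import Mathlib


open RealInnerProductSpace

/-- The convex conjugate of a function `A : ℝ^d → ℝ`, with values in `ℝ ∪ {±∞}`:
`A* x = ⨆ θ, (⟪θ, x⟫ - A θ)`. -/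
noncomputable def convexConj {d : ℕ} (A : EuclideanSpace ℝ (Fin d) → ℝ)
    (x : EuclideanSpace ℝ (Fin d)) : EReal :=
  ⨆ θ : EuclideanSpace ℝ (Fin d), ((⟪θ, x⟫ - A θ : ℝ) : EReal)

/-- If `A : ℝ^d → ℝ` is convex and `B` is a linear, self-adjoint, positive-definite (hence
invertible) map with `A* = A ∘ B`, then `A x = ⟪x, B⁻¹ x⟫ / 2`; i.e. an exponential family
whose cumulant generating function satisfies `A* = A ∘ B` is the Gaussian location family
with covariance matrix `B`. -/
theorem conj_eq_comp_implies_gaussian {d : ℕ} (A : EuclideanSpace ℝ (Fin d) → ℝ)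
    (hA : ConvexOn ℝ Set.univ A)
    (B : EuclideanSpace ℝ (Fin d) ≃ₗ[ℝ] EuclideanSpace ℝ (Fin d))
    (hBsa : ∀ x y : EuclideanSpace ℝ (Fin d), ⟪B x, y⟫ = ⟪x, B y⟫)
    (hBpos : ∀ x : EuclideanSpace ℝ (Fin d), x ≠ 0 → 0 < ⟪B x, x⟫)
    (hconj : ∀ x : EuclideanSpace ℝ (Fin d), convexConj A x = ((A (B x) : ℝ) : EReal)) :
    ∀ x : EuclideanSpace ℝ (Fin d), A x = (1 / 2) * ⟪x, B.symm x⟫ := by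
  -- Fenchel-Young inequality
  have hFY : ∀ θ x : EuclideanSpace ℝ (Fin d), ⟪θ, x⟫ - A θ ≤ A (B x) := by
    intro θ x
    have h1 : ((⟪θ, x⟫ - A θ : ℝ) : EReal) ≤ convexConj A x :=
      le_iSup (fun θ : EuclideanSpace ℝ (Fin d) => ((⟪θ, x⟫ - A θ : ℝ) : EReal)) θ
    rw [hconj x] at h1
    exact_mod_cast h1
  -- B is positive semidefinite
  have hBnn : ∀ w : EuclideanSpace ℝ (Fin d), 0 ≤ ⟪B w, w⟫ := by
    intro w
    rcases eq_or_ne w 0 with h | h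
    · simp [h]
    · exact (hBpos w h).le
  -- lower bound: A y ≥ (1/2) ⟪y, B⁻¹ y⟫
  have hlow : ∀ y : EuclideanSpace ℝ (Fin d), (1 / 2) * ⟪y, B.symm y⟫ ≤ A y := by
    intro y
    have h := hFY y (B.symm y)
    rw [B.apply_symm_apply] at h
    linarith
  -- completion of the square: ⟪θ, x⟫ - (1/2)⟪θ, B⁻¹θ⟫ ≤ (1/2)⟪x, B x⟫
  have hsq : ∀ x θ : EuclideanSpace ℝ (Fin d),
      ⟪θ, x⟫ - (1 / 2) * ⟪θ, B.symm θ⟫ ≤ (1 / 2) * ⟪x, B x⟫ := by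
    intro x θ
    set z := B.symm θ with hz
    have hθ : θ = B z := (B.apply_symm_apply θ).symm
    have h1 : ⟪θ, B.symm θ⟫ = ⟪B z, z⟫ := by rw [hθ, B.symm_apply_apply]
    have h2 : ⟪θ, x⟫ = ⟪B z, x⟫ := by rw [hθ]
    have key : (0 : ℝ) ≤ ⟪B (z - x), z - x⟫ := hBnn _
    have hcomm : ⟪B x, z⟫ = ⟪B z, x⟫ := by
      rw [hBsa x z, real_inner_comm]
    have expand : ⟪B (z - x), z - x⟫
        = ⟪B z, z⟫ - 2 * ⟪B z, x⟫ + ⟪B x, x⟫ := by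
      rw [map_sub, inner_sub_left, inner_sub_right, inner_sub_right, hcomm]
      ring
    have hx : ⟪x, B x⟫ = ⟪B x, x⟫ := real_inner_comm _ _
    rw [h1, h2, hx]
    nlinarith [key, expand]
  -- upper bound
  have hup : ∀ y : EuclideanSpace ℝ (Fin d), A y ≤ (1 / 2) * ⟪y, B.symm y⟫ := by
    intro y
    set x := B.symm y with hx
    have hy : y = B x := (B.apply_symm_apply y).symm
    have h1 : ((A (B x) : ℝ) : EReal) ≤ (((1 / 2) * ⟪x, B x⟫ : ℝ) : EReal) := by
      rw [← hconj x]
      refine iSup_le fun θ => ?_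
      have : ⟪θ, x⟫ - A θ ≤ (1 / 2) * ⟪x, B x⟫ := by
        have := hlow θ
        have := hsq x θ
        linarith
      exact_mod_cast this
    have h2 : A (B x) ≤ (1 / 2) * ⟪x, B x⟫ := by exact_mod_cast h1
    have h3 : ⟪x, B x⟫ = ⟪y, B.symm y⟫ := by
      rw [hx, B.apply_symm_apply, real_inner_comm]
    rw [h3] at h2
    rwa [← hy] at h2
  intro x
  exact le_antisymm (hup x) (hlow x)
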